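/- (Tangency is preserved under parabolic rescaling.) Let R ≥ 1, E > 0 with E R^{-1/2} ≤ 1/2, and ξ₀, ζ ∈ ℝ² with |ξ₀| ≤ 1 and |ζ| ≤ 1; set ξ = ξ₀ + R^{-1/4} ζ. Let P be a polynomial on ℝ³ and define Q(x̃, t̃) := P(R^{1/4} x̃ − 2 R^{1/2} t̃ ξ₀, R^{1/2} t̃). Let z₀ = (x₀, t₀) ∈ ℝ³ with ∇P(z₀) ≠ 0 and let z̃₀ = (R^{-1/4} x₀ + 2 t₀ R^{-1/4} ξ₀, R^{-1/2} t₀) be its image. If |(-2ξ, 1) · ∇P(z₀)| / |∇P(z₀)| ≤ E R^{-1/2}, then ∇Q(z̃₀) ≠ 0 and |(-2ζ, 1) · ∇Q(z̃₀)| / |∇Q(z̃₀)| ≤ C E R^{-1/4} for an absolute constant C. -/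

import Mathlib

open MvPolynomial

noncomputable section

/-- gradient of a polynomial on `ℝ³` -/
def grad3 (P : MvPolynomial (Fin 3) ℝ) (z : Fin 3 → ℝ) : Fin 3 → ℝ :=
  fun i => MvPolynomial.eval z (MvPolynomial.pderiv i P)

/-- Euclidean dot product on `ℝ³` -/
def dot3 (v w : Fin 3 → ℝ) : ℝ := ∑ i, v i * w i

/-- Euclidean length on `ℝ³` -/
def len3 (v : Fin 3 → ℝ) : ℝ := Real.sqrt (∑ i, v i ^ 2)

/-- the direction `(-2w, 1)` of a wave packet with frequency center `w` -/
def dirV (w : Fin 2 → ℝ) : Fin 3 → ℝ := ![(-2) * w 0, (-2) * w 1, 1]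

/-- `Q(x̃,t̃) = P(R^{1/4}x̃ − 2R^{1/2}t̃ξ₀, R^{1/2}t̃)`, the polynomial arising from `P` under
parabolic rescaling at frequency center `ξ₀` and scale `R^{-1/4}`. -/
def rescaledPoly (R : ℝ) (ξ₀ : Fin 2 → ℝ) (P : MvPolynomial (Fin 3) ℝ) :
    MvPolynomial (Fin 3) ℝ :=
  MvPolynomial.bind₁
    ![C (R ^ ((1:ℝ)/4)) * X 0 - C (2 * R ^ ((1:ℝ)/2) * ξ₀ 0) * X 2,
      C (R ^ ((1:ℝ)/4)) * X 1 - C (2 * R ^ ((1:ℝ)/2) * ξ₀ 1) * X 2,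
      C (R ^ ((1:ℝ)/2)) * X 2] P

/-!
The rescaling is a linear change of variables, so by the chain rule
`∇Q(z̃₀) = (s ∂ₓP, s² (-2ξ₀,1)·∇P)(z₀)` with `s = R^{1/4}`. Pairing this with `(-2ζ,1)` gives
exactly `s² (-2ξ,1)·∇P(z₀)`, while `|ξ₀| ≤ 1` keeps the shear `(-2ξ₀,1)·` from shrinking the
covector by more than a factor `3`: `s |∇P(z₀)| ≤ 3 |∇Q(z̃₀)|`. So the angle `≤ E R^{-1/2}`
becomes an angle `≤ 3 E R^{-1/4}`.
-/

theorem MvPolynomial.pderiv_bind₁ {σ R : Type*} [CommSemiring R] [Fintype σ]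
    (f : σ → MvPolynomial σ R) (p : MvPolynomial σ R) (i : σ) :
    pderiv i (bind₁ f p) = ∑ j, bind₁ f (pderiv j p) * pderiv i (f j) := by
  classical
  induction p using MvPolynomial.induction_on with
  | C a => simp
  | add p q hp hq => simp [hp, hq, add_mul, Finset.sum_add_distrib]
  | mul_X p j hp =>
    simp only [map_mul, map_add, bind₁_X_right, pderiv_mul, hp, pderiv_X, Finset.sum_mul, add_mul,
      Finset.sum_add_distrib]
    congr 1
    · exact Finset.sum_congr rfl fun k _ => mul_right_comm _ _ _
    · simp [Pi.single_apply]

theorem MvPolynomial.eval_pderiv_bind₁ {σ R : Type*} [CommSemiring R] [Fintype σ]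
    (f : σ → MvPolynomial σ R) (p : MvPolynomial σ R) (i : σ) (z : σ → R) :
    eval z (pderiv i (bind₁ f p)) =
      ∑ j, eval (fun k => eval z (f k)) (pderiv j p) * eval z (pderiv i (f j)) := by
  simp only [pderiv_bind₁, map_sum, map_mul]
  exact Finset.sum_congr rfl fun j _ => congrArg (· * _) (eval₂Hom_bind₁ _ _ _ _)

lemma rpow_half_eq_sq_rpow_quarter {R : ℝ} (hR : 0 ≤ R) :
    R ^ ((1:ℝ)/2) = (R ^ ((1:ℝ)/4)) ^ 2 := by
  rw [← Real.rpow_natCast, ← Real.rpow_mul hR]; norm_num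

def rescaledGrad (s : ℝ) (ξ₀ : Fin 2 → ℝ) (g : Fin 3 → ℝ) : Fin 3 → ℝ :=
  ![s * g 0, s * g 1, s ^ 2 * dot3 (dirV ξ₀) g]

lemma grad3_rescaledPoly {R : ℝ} (hR : 0 < R) (ξ₀ : Fin 2 → ℝ) (P : MvPolynomial (Fin 3) ℝ)
    (z₀ : Fin 3 → ℝ) :
    grad3 (rescaledPoly R ξ₀ P)
        ![R ^ (-(1:ℝ)/4) * z₀ 0 + 2 * z₀ 2 * R ^ (-(1:ℝ)/4) * ξ₀ 0,
          R ^ (-(1:ℝ)/4) * z₀ 1 + 2 * z₀ 2 * R ^ (-(1:ℝ)/4) * ξ₀ 1,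
          R ^ (-(1:ℝ)/2) * z₀ 2] =
      rescaledGrad (R ^ ((1:ℝ)/4)) ξ₀ (grad3 P z₀) := by
  funext i
  simp only [grad3, rescaledPoly, eval_pderiv_bind₁]
  rw [neg_div, neg_div, Real.rpow_neg hR.le, Real.rpow_neg hR.le,
    rpow_half_eq_sq_rpow_quarter hR.le]
  have hs : R ^ ((1:ℝ)/4) ≠ 0 := (Real.rpow_pos_of_pos hR _).ne'
  set s := R ^ ((1:ℝ)/4)
  have h_image : (fun k => eval ![s⁻¹ * z₀ 0 + 2 * z₀ 2 * s⁻¹ * ξ₀ 0,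
      s⁻¹ * z₀ 1 + 2 * z₀ 2 * s⁻¹ * ξ₀ 1, (s ^ 2)⁻¹ * z₀ 2]
      (![C s * X 0 - C (2 * s ^ 2 * ξ₀ 0) * X 2, C s * X 1 - C (2 * s ^ 2 * ξ₀ 1) * X 2,
        C (s ^ 2) * X 2] k)) = z₀ := by
    funext k
    fin_cases k <;> simp <;> field_simp <;> ring
  rw [h_image]
  fin_cases i <;> simp [rescaledGrad, Fin.sum_univ_three, dot3, dirV, grad3] <;> ring

lemma dot3_dirV_rescaledGrad {s : ℝ} (hs : s ≠ 0) (ξ₀ ζ : Fin 2 → ℝ) (g : Fin 3 → ℝ) :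
    dot3 (dirV ζ) (rescaledGrad s ξ₀ g) = s ^ 2 * dot3 (dirV (fun i => ξ₀ i + s⁻¹ * ζ i)) g := by
  simp only [dot3, dirV, rescaledGrad, Fin.sum_univ_three, Matrix.cons_val_zero,
    Matrix.cons_val_one, Matrix.cons_val_two, Matrix.head_cons, Matrix.tail_cons]
  field_simp
  ring

lemma len3_pos_iff {v : Fin 3 → ℝ} : 0 < len3 v ↔ v ≠ 0 := by
  rw [len3, Real.sqrt_pos, Ne, funext_iff]
  simpa [sq_pos_iff] using
    Finset.sum_pos_iff_of_nonneg (s := Finset.univ) fun i _ => sq_nonneg (v i)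

lemma sum_sq_le_nine_mul_sq_add_sq_dot3_dirV {ξ₀ : Fin 2 → ℝ} (hξ₀ : ∑ i, ξ₀ i ^ 2 ≤ 1)
    (g : Fin 3 → ℝ) :
    ∑ i, g i ^ 2 ≤ 9 * (g 0 ^ 2 + g 1 ^ 2 + dot3 (dirV ξ₀) g ^ 2) := by
  simp only [dot3, dirV, Fin.sum_univ_three, Fin.sum_univ_two, Matrix.cons_val_zero,
    Matrix.cons_val_one, Matrix.cons_val_two, Matrix.head_cons, Matrix.tail_cons] at hξ₀ ⊢
  have cauchy_schwarz : (ξ₀ 0 * g 0 + ξ₀ 1 * g 1) ^ 2 ≤ g 0 ^ 2 + g 1 ^ 2 := by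
    nlinarith [sq_nonneg (ξ₀ 0 * g 1 - ξ₀ 1 * g 0),
      mul_nonneg (sub_nonneg.mpr hξ₀) (by positivity : (0:ℝ) ≤ g 0 ^ 2 + g 1 ^ 2)]
  nlinarith [sq_nonneg (4 * g 2 - 9 * (ξ₀ 0 * g 0 + ξ₀ 1 * g 1))]

lemma mul_len3_le_three_mul_len3_rescaledGrad {s : ℝ} (hs : 1 ≤ s) {ξ₀ : Fin 2 → ℝ}
    (hξ₀ : ∑ i, ξ₀ i ^ 2 ≤ 1) (g : Fin 3 → ℝ) :
    s * len3 g ≤ 3 * len3 (rescaledGrad s ξ₀ g) := by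
  have hs2 : s ^ 2 ≤ s ^ 4 := pow_le_pow_right₀ hs (by norm_num)
  have h_sq : s ^ 2 * ∑ i, g i ^ 2 ≤ 9 * ∑ i, rescaledGrad s ξ₀ g i ^ 2 := by
    have := sum_sq_le_nine_mul_sq_add_sq_dot3_dirV hξ₀ g
    simp only [rescaledGrad, Fin.sum_univ_three, Matrix.cons_val_zero,
      Matrix.cons_val_one, Matrix.cons_val_two, Matrix.head_cons, Matrix.tail_cons] at this ⊢
    nlinarith [mul_le_mul_of_nonneg_right hs2 (sq_nonneg (dot3 (dirV ξ₀) g)),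
      mul_le_mul_of_nonneg_left this (sq_nonneg s)]
  calc s * len3 g = √(s ^ 2 * ∑ i, g i ^ 2) := by
        rw [len3, Real.sqrt_mul (sq_nonneg s), Real.sqrt_sq (zero_le_one.trans hs)]
    _ ≤ √(9 * ∑ i, rescaledGrad s ξ₀ g i ^ 2) := Real.sqrt_le_sqrt h_sq
    _ = 3 * len3 (rescaledGrad s ξ₀ g) := by
        rw [len3, Real.sqrt_mul (by norm_num), show (9:ℝ) = 3 ^ 2 by norm_num,
          Real.sqrt_sq (by norm_num)]

/-- **Tangency is preserved under parabolic rescaling.**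
If the wave-packet direction `(-2ξ,1)` with `ξ = ξ₀ + R^{-1/4}ζ` makes (sine of) angle
`≤ E R^{-1/2}` with the tangent plane of `Z(P)` at a nonsingular point `z₀`, then after
parabolic rescaling the direction `(-2ζ,1)` makes angle `≤ C E R^{-1/4}` with the tangent
plane of `Z(Q)` at the image point `z̃₀`, for an absolute constant `C`. -/
theorem stmt19 :
    ∃ C : ℝ, 0 < C ∧
      ∀ (R E : ℝ) (ξ₀ ζ : Fin 2 → ℝ) (P : MvPolynomial (Fin 3) ℝ) (z₀ : Fin 3 → ℝ),
        1 ≤ R → 0 < E → E * R ^ (-(1:ℝ)/2) ≤ 1/2 →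
        Real.sqrt (∑ i, ξ₀ i ^ 2) ≤ 1 → Real.sqrt (∑ i, ζ i ^ 2) ≤ 1 →
        grad3 P z₀ ≠ 0 →
        |dot3 (dirV (fun i => ξ₀ i + R ^ (-(1:ℝ)/4) * ζ i)) (grad3 P z₀)| ≤
          E * R ^ (-(1:ℝ)/2) * len3 (grad3 P z₀) →
        grad3 (rescaledPoly R ξ₀ P)
            ![R ^ (-(1:ℝ)/4) * z₀ 0 + 2 * z₀ 2 * R ^ (-(1:ℝ)/4) * ξ₀ 0,
              R ^ (-(1:ℝ)/4) * z₀ 1 + 2 * z₀ 2 * R ^ (-(1:ℝ)/4) * ξ₀ 1,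
              R ^ (-(1:ℝ)/2) * z₀ 2] ≠ 0 ∧
        |dot3 (dirV ζ)
            (grad3 (rescaledPoly R ξ₀ P)
              ![R ^ (-(1:ℝ)/4) * z₀ 0 + 2 * z₀ 2 * R ^ (-(1:ℝ)/4) * ξ₀ 0,
                R ^ (-(1:ℝ)/4) * z₀ 1 + 2 * z₀ 2 * R ^ (-(1:ℝ)/4) * ξ₀ 1,
                R ^ (-(1:ℝ)/2) * z₀ 2])| ≤
          C * E * R ^ (-(1:ℝ)/4) *
            len3 (grad3 (rescaledPoly R ξ₀ P)
              ![R ^ (-(1:ℝ)/4) * z₀ 0 + 2 * z₀ 2 * R ^ (-(1:ℝ)/4) * ξ₀ 0,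
                R ^ (-(1:ℝ)/4) * z₀ 1 + 2 * z₀ 2 * R ^ (-(1:ℝ)/4) * ξ₀ 1,
                R ^ (-(1:ℝ)/2) * z₀ 2]) := by
  refine ⟨3, by norm_num, fun R E ξ₀ ζ P z₀ hR hE _ hξ₀ _ hP hdot => ?_⟩
  have hR0 : 0 < R := zero_lt_one.trans_le hR
  have hs : 1 ≤ R ^ ((1:ℝ)/4) := Real.one_le_rpow hR (by norm_num)
  rw [grad3_rescaledPoly hR0]
  simp only [neg_div, Real.rpow_neg hR0.le, rpow_half_eq_sq_rpow_quarter hR0.le] at hdot ⊢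
  set s := R ^ ((1:ℝ)/4)
  set v := rescaledGrad s ξ₀ (grad3 P z₀)
  have hs0 : 0 < s := zero_lt_one.trans_le hs
  have hcmp := mul_len3_le_three_mul_len3_rescaledGrad hs (Real.sqrt_le_one.mp hξ₀) (grad3 P z₀)
  have hP_len : 0 < len3 (grad3 P z₀) := len3_pos_iff.mpr hP
  refine ⟨len3_pos_iff.mp (by nlinarith), ?_⟩
  rw [dot3_dirV_rescaledGrad hs0.ne', abs_mul, abs_of_nonneg (sq_nonneg s)]
  calc s ^ 2 * |dot3 (dirV fun i => ξ₀ i + s⁻¹ * ζ i) (grad3 P z₀)|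
      ≤ s ^ 2 * (E * (s ^ 2)⁻¹ * len3 (grad3 P z₀)) := by gcongr
    _ = E * s⁻¹ * (s * len3 (grad3 P z₀)) := by field_simp
    _ ≤ E * s⁻¹ * (3 * len3 v) := by gcongr
    _ = 3 * E * s⁻¹ * len3 v := by ring
end
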